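/- arXiv:0906.3478 — 5 statements merged into one kernel-verified Lean document; each statement's English description precedes it below -/
import Mathlib

section
/- For every rational q > 0 there exist positive real constants C' and D' such that for all natural numbers m with q·m ∈ ℕ, one has (C')^m · (m!)^q ≤ (qm)! ≤ (D')^m · (m!)^q. -/
lemma aux_pow_div_exp_le_factorial (n : ℕ) :
    ((n : ℝ) / Real.exp 1) ^ n ≤ Nat.factorial n := by
  have h := Real.pow_div_factorial_le_exp (x := (n : ℝ)) (Nat.cast_nonneg n) n
  have hfac : (0 : ℝ) < Nat.factorial n := by positivity
  have h2 : (n : ℝ) ^ n ≤ Real.exp n * Nat.factorial n := by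
    rw [div_le_iff₀ hfac] at h; linarith
  have hexp : Real.exp (n : ℝ) = Real.exp 1 ^ n := by
    rw [← Real.exp_nat_mul]; ring_nf
  rw [div_pow, div_le_iff₀ (by positivity)]
  calc (n : ℝ) ^ n ≤ Real.exp n * Nat.factorial n := h2
    _ = (Nat.factorial n : ℝ) * Real.exp 1 ^ n := by rw [hexp]; ring

lemma aux_factorial_le_pow (n : ℕ) : (Nat.factorial n : ℝ) ≤ (n : ℝ) ^ n := by
  exact_mod_cast Nat.cast_le.mpr (Nat.factorial_le_pow n)

/-- For every rational `q > 0` there are constants `C', D' > 0` such that for all `m ∈ ℕ`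
with `q·m ∈ ℕ` (say `q·m = k`), one has `(C')^m (m!)^q ≤ (qm)! ≤ (D')^m (m!)^q`. -/
theorem stmt2 (q : ℚ) (hq : 0 < q) :
    ∃ C D : ℝ, 0 < C ∧ 0 < D ∧ ∀ m k : ℕ, (k : ℚ) = q * m →
      C ^ m * (Nat.factorial m : ℝ) ^ (q : ℝ) ≤ (Nat.factorial k : ℝ) ∧
      (Nat.factorial k : ℝ) ≤ D ^ m * (Nat.factorial m : ℝ) ^ (q : ℝ) := by
  have hqR : (0 : ℝ) < (q : ℝ) := by exact_mod_cast hq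
  have he : (0 : ℝ) < Real.exp 1 := Real.exp_pos 1
  refine ⟨((q : ℝ) / Real.exp 1) ^ (q : ℝ), ((q : ℝ) * Real.exp 1) ^ (q : ℝ),
    Real.rpow_pos_of_pos (by positivity) _, Real.rpow_pos_of_pos (by positivity) _,
    fun m k hk => ?_⟩
  have hkR : (k : ℝ) = (q : ℝ) * m := by exact_mod_cast hk
  -- rewrite C^m and D^m as rpow of k
  have hCm : (((q : ℝ) / Real.exp 1) ^ (q : ℝ)) ^ m
      = ((q : ℝ) / Real.exp 1) ^ (k : ℕ) := by
    rw [← Real.rpow_natCast (((q : ℝ) / Real.exp 1) ^ (q : ℝ)) m,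
      ← Real.rpow_natCast ((q : ℝ) / Real.exp 1) k,
      ← Real.rpow_mul (by positivity), hkR]
  have hDm : (((q : ℝ) * Real.exp 1) ^ (q : ℝ)) ^ m
      = ((q : ℝ) * Real.exp 1) ^ (k : ℕ) := by
    rw [← Real.rpow_natCast (((q : ℝ) * Real.exp 1) ^ (q : ℝ)) m,
      ← Real.rpow_natCast ((q : ℝ) * Real.exp 1) k,
      ← Real.rpow_mul (by positivity), hkR]
  have hmk : ∀ x : ℝ, 0 ≤ x → (x ^ m) ^ (q : ℝ) = x ^ (k : ℕ) := by
    intro x hx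
    rw [← Real.rpow_natCast x m, ← Real.rpow_natCast x k,
      ← Real.rpow_mul hx, hkR, mul_comm]
  constructor
  · -- lower bound
    calc (((q : ℝ) / Real.exp 1) ^ (q : ℝ)) ^ m * (Nat.factorial m : ℝ) ^ (q : ℝ)
        ≤ (((q : ℝ) / Real.exp 1) ^ (q : ℝ)) ^ m * ((m : ℝ) ^ m) ^ (q : ℝ) := by
          exact mul_le_mul_of_nonneg_left
            (Real.rpow_le_rpow (by positivity) (aux_factorial_le_pow m) hqR.le)
            (by positivity)
      _ = ((q : ℝ) / Real.exp 1) ^ (k : ℕ) * (m : ℝ) ^ (k : ℕ) := by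
          rw [hCm, hmk (m : ℝ) (Nat.cast_nonneg m)]
      _ = ((k : ℝ) / Real.exp 1) ^ (k : ℕ) := by
          rw [← mul_pow, hkR]; ring_nf
      _ ≤ Nat.factorial k := aux_pow_div_exp_le_factorial k
  · -- upper bound
    calc (Nat.factorial k : ℝ) ≤ (k : ℝ) ^ k := aux_factorial_le_pow k
      _ = ((q : ℝ) * Real.exp 1) ^ (k : ℕ) * ((m : ℝ) / Real.exp 1) ^ (k : ℕ) := by
          have hb : (q : ℝ) * Real.exp 1 * ((m : ℝ) / Real.exp 1) = (q : ℝ) * m := by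
            field_simp
          rw [← mul_pow, hb, hkR]
      _ ≤ ((q : ℝ) * Real.exp 1) ^ (k : ℕ) * (Nat.factorial m : ℝ) ^ (q : ℝ) := by
          have h1 : ((m : ℝ) / Real.exp 1) ^ (k : ℕ)
              = (((m : ℝ) / Real.exp 1) ^ m) ^ (q : ℝ) := by
            rw [hmk ((m : ℝ) / Real.exp 1) (by positivity)]
          rw [h1]
          exact mul_le_mul_of_nonneg_left
            (Real.rpow_le_rpow (by positivity) (aux_pow_div_exp_le_factorial m) hqR.le)
            (by positivity)
      _ = (((q : ℝ) * Real.exp 1) ^ (q : ℝ)) ^ m * (Nat.factorial m : ℝ) ^ (q : ℝ) := by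
          rw [hDm]
end

section
/- Let A ∈ ℤ^{d×n} of full rank, σ ⊆ {1,…,n} a simplex (|σ|=d, det(A_σ)≠0). For k ∈ ℤ^{n-d} define Λ_k := { k+m ∈ ℕ^{n-d} : A_{σ̄} m ∈ ℤ·A_σ }. Then: (a) {Λ_k : k ∈ ℤ^{n-d}} = {Λ_k : k ∈ ℕ^{n-d}}; (b) the number of distinct sets Λ_k equals the group index [ℤ·A : ℤ·A_σ]. -/
open Matrix

/-!
`Λ_k` is the set of nonnegative points of the coset `k + L`, where `L = {m : A_τ m ∈ ℤA_σ}`.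
Since `det A_σ` annihilates `ℤ^d / ℤA_σ`, the lattice `L` has finite index in `ℤ^e`, so every
coset of `L` contains a nonnegative point. Hence `Λ_k` determines the coset `k + L`, the sets
`Λ_k` correspond bijectively to `ℤ^e / L`, and `[ℤ^e : L] = [ℤA_σ + ℤA_τ : ℤA_σ]`.
-/

/-- The subgroup of `ℤ^d` generated by the columns of an integer matrix. -/
def colSpanZ {d : ℕ} {ι : Type} (M : Matrix (Fin d) ι ℤ) : AddSubgroup (Fin d → ℤ) :=
  AddSubgroup.closure (Set.range fun j => fun i => M i j)

/-- `Λ_k := { k+m ∈ ℕ^{n-d} : A_{σ̄} m ∈ ℤA_σ }`, with coordinates ordered so that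
`σ` comes first and `A = (Aσ | Aτ)`. -/
def Lam {d e : ℕ} (Aσ : Matrix (Fin d) (Fin d) ℤ) (Aτ : Matrix (Fin d) (Fin e) ℤ)
    (k : Fin e → ℤ) : Set (Fin e → ℤ) :=
  {x | (∀ j, 0 ≤ x j) ∧ Aτ *ᵥ (x - k) ∈ colSpanZ Aσ}

lemma colSpanZ_eq_range {d : ℕ} {ι : Type} [Fintype ι] (M : Matrix (Fin d) ι ℤ) :
    colSpanZ M = M.mulVecLin.toAddMonoidHom.range := by
  rw [colSpanZ, ← LinearMap.range_toAddSubgroup, Matrix.range_mulVecLin,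
    Submodule.span_int_eq_addSubgroupClosure]
  rfl

lemma det_smul_mem_colSpanZ {d : ℕ} (A : Matrix (Fin d) (Fin d) ℤ) (v : Fin d → ℤ) :
    A.det • v ∈ colSpanZ A := by
  rw [colSpanZ_eq_range, ← Matrix.one_mulVec v, ← Matrix.smul_mulVec, ← Matrix.mul_adjugate,
    ← Matrix.mulVec_mulVec]
  exact ⟨_, rfl⟩

lemma AddSubgroup.finiteIndex_of_zsmul_mem {G : Type*} [AddCommGroup G] [AddGroup.FG G]
    {H : AddSubgroup G} {n : ℤ} (hn : n ≠ 0) (h : ∀ g, n • g ∈ H) : H.FiniteIndex := by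
  have : IsAddTorsion (G ⧸ H) := by
    rintro ⟨g⟩
    exact isOfFinAddOrder_iff_zsmul_eq_zero.2
      ⟨n, hn, (QuotientAddGroup.eq_zero_iff _).2 (h g)⟩
  have := AddCommGroup.finite_of_fg_isAddTorsion (G ⧸ H) this
  exact AddSubgroup.finiteIndex_of_finite_quotient

section NonnegCoset

variable {ι : Type*} (L : AddSubgroup (ι → ℤ))

def nonnegCoset (k : ι → ℤ) : Set (ι → ℤ) :=
  {x | (∀ j, 0 ≤ x j) ∧ x - k ∈ L}

-- `k + [ℤ^ι : L] • |k|` is nonnegative and lies in `k + L`.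
lemma exists_nonneg_sub_mem [L.FiniteIndex] (k : ι → ℤ) :
    ∃ k', (∀ j, 0 ≤ k' j) ∧ k' - k ∈ L := by
  have hidx : (1 : ℤ) ≤ L.index := by
    exact_mod_cast Nat.one_le_iff_ne_zero.2 AddSubgroup.FiniteIndex.index_ne_zero
  refine ⟨k + L.index • |k|, fun j => ?_, ?_⟩
  · show 0 ≤ k j + L.index • |k j|
    rw [nsmul_eq_mul]
    nlinarith [neg_le_abs (k j), abs_nonneg (k j)]
  · simpa using L.nsmul_index_mem |k|

lemma nonnegCoset_eq_iff [L.FiniteIndex] {k k' : ι → ℤ} :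
    nonnegCoset L k = nonnegCoset L k' ↔ (k : (ι → ℤ) ⧸ L) = k' := by
  rw [QuotientAddGroup.eq, neg_add_eq_sub]
  constructor
  · intro h
    obtain ⟨x, hx⟩ := exists_nonneg_sub_mem L k
    have hx' : x ∈ nonnegCoset L k' := h ▸ hx
    simpa using L.sub_mem hx.2 hx'.2
  · intro h
    ext x
    refine and_congr_right fun _ => ⟨fun hx => ?_, fun hx => ?_⟩
    · simpa using L.sub_mem hx h
    · simpa using L.add_mem hx h

lemma exists_nonneg_nonnegCoset_eq [L.FiniteIndex] (k : ι → ℤ) :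
    ∃ k', (∀ j, 0 ≤ k' j) ∧ nonnegCoset L k' = nonnegCoset L k := by
  obtain ⟨k', hk', hmem⟩ := exists_nonneg_sub_mem L k
  refine ⟨k', hk', (nonnegCoset_eq_iff L).2 ?_⟩
  rw [QuotientAddGroup.eq]
  simpa [neg_add_eq_sub] using L.neg_mem hmem

lemma ncard_range_nonnegCoset [L.FiniteIndex] : (Set.range (nonnegCoset L)).ncard = L.index := by
  let φ : (ι → ℤ) ⧸ L → Set (ι → ℤ) :=
    Quotient.lift (nonnegCoset L) fun _ _ h => (nonnegCoset_eq_iff L).2 (Quotient.sound h)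
  have hφ : Function.Injective φ := by
    rintro ⟨k⟩ ⟨k'⟩ h
    exact (nonnegCoset_eq_iff L).1 h
  rw [show nonnegCoset L = φ ∘ QuotientAddGroup.mk from rfl,
    QuotientAddGroup.mk_surjective.range_comp]
  exact Set.ncard_range_of_injective hφ

end NonnegCoset

/-- (a) The family of sets `Λ_k` for `k ∈ ℤ^{n-d}` coincides with the family for
`k ∈ ℕ^{n-d}`; (b) the number of distinct sets `Λ_k` equals `[ℤA : ℤA_σ]`. -/
theorem stmt7 (d e : ℕ) (Aσ : Matrix (Fin d) (Fin d) ℤ) (Aτ : Matrix (Fin d) (Fin e) ℤ)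
    (hdet : Aσ.det ≠ 0) :
    ({S | ∃ k : Fin e → ℤ, S = Lam Aσ Aτ k} =
      {S | ∃ k : Fin e → ℤ, (∀ j, 0 ≤ k j) ∧ S = Lam Aσ Aτ k}) ∧
    Set.ncard {S | ∃ k : Fin e → ℤ, S = Lam Aσ Aτ k} =
      (colSpanZ Aσ).relIndex (colSpanZ Aσ ⊔ colSpanZ Aτ) := by
  set f := Aτ.mulVecLin.toAddMonoidHom
  set L := (colSpanZ Aσ).comap f
  have hLam : Lam Aσ Aτ = nonnegCoset L := rfl
  have : L.FiniteIndex := AddSubgroup.finiteIndex_of_zsmul_mem hdet fun v => by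
    show Aτ *ᵥ (Aσ.det • v) ∈ colSpanZ Aσ
    rw [Matrix.mulVec_smul]
    exact det_smul_mem_colSpanZ Aσ (Aτ *ᵥ v)
  have hrange : {S | ∃ k : Fin e → ℤ, S = Lam Aσ Aτ k} = Set.range (nonnegCoset L) := by
    ext S
    simp [hLam, eq_comm]
  refine ⟨?_, ?_⟩
  · ext S
    refine ⟨fun ⟨k, hS⟩ => ?_, fun ⟨k, _, hS⟩ => ⟨k, hS⟩⟩
    obtain ⟨k', hk', hk'eq⟩ := exists_nonneg_nonnegCoset_eq L k
    exact ⟨k', hk', hS.trans (hLam ▸ hk'eq.symm)⟩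
  · rw [hrange, ncard_range_nonnegCoset, AddSubgroup.index_comap, AddSubgroup.relIndex_sup_left,
      colSpanZ_eq_range Aτ]
end

section
/- With A, σ, Λ_k as above, choose k(1),…,k(r) ∈ ℕ^{n-d} whose images A_{σ̄}k(i) represent all r = [ℤ·A : ℤ·A_σ] classes of (ℤ·A)/(ℤ·A_σ). Then the sets Λ_{k(1)},…,Λ_{k(r)} form a partition of ℕ^{n-d}: they are pairwise disjoint and their union is ℕ^{n-d}. -/
open Matrix

section Lam

variable {d e : ℕ} {Aσ : Matrix (Fin d) (Fin d) ℤ} {Aτ : Matrix (Fin d) (Fin e) ℤ}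

theorem mem_Lam_iff {k x : Fin e → ℤ} :
    x ∈ Lam Aσ Aτ k ↔ (∀ j, 0 ≤ x j) ∧ Aτ *ᵥ x - Aτ *ᵥ k ∈ colSpanZ Aσ := by
  rw [Lam, Set.mem_ofPred_eq, mulVec_sub]

theorem Lam_subset_nonneg (k : Fin e → ℤ) : Lam Aσ Aτ k ⊆ {x | ∀ j, 0 ≤ x j} :=
  fun _ hx => hx.1

theorem mem_colSpanZ_of_Lam_inter {k k' x : Fin e → ℤ} (hx : x ∈ Lam Aσ Aτ k)
    (hx' : x ∈ Lam Aσ Aτ k') : Aτ *ᵥ k - Aτ *ᵥ k' ∈ colSpanZ Aσ := by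
  have h := sub_mem (mem_Lam_iff.1 hx').2 (mem_Lam_iff.1 hx).2
  rwa [sub_sub_sub_cancel_left] at h

theorem disjoint_Lam {k k' : Fin e → ℤ} (h : Aτ *ᵥ k - Aτ *ᵥ k' ∉ colSpanZ Aσ) :
    Disjoint (Lam Aσ Aτ k) (Lam Aσ Aτ k') :=
  Set.disjoint_left.2 fun _ hx hx' => h (mem_colSpanZ_of_Lam_inter hx hx')

end Lam

theorem stmt8_general (d e r : ℕ) (Aσ : Matrix (Fin d) (Fin d) ℤ) (Aτ : Matrix (Fin d) (Fin e) ℤ)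
    (k : Fin r → (Fin e → ℤ))
    (hinj : ∀ i i', Aτ *ᵥ k i - Aτ *ᵥ k i' ∈ colSpanZ Aσ → i = i')
    (hsurj : ∀ m : Fin e → ℤ, ∃ i, Aτ *ᵥ m - Aτ *ᵥ k i ∈ colSpanZ Aσ) :
    (Pairwise fun i i' => Disjoint (Lam Aσ Aτ (k i)) (Lam Aσ Aτ (k i'))) ∧
      (⋃ i, Lam Aσ Aτ (k i)) = {x : Fin e → ℤ | ∀ j, 0 ≤ x j} := by
  refine ⟨fun i i' hne => disjoint_Lam fun h => hne (hinj i i' h), ?_⟩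
  refine (Set.iUnion_subset fun i => Lam_subset_nonneg (k i)).antisymm fun x hx => ?_
  obtain ⟨i, hi⟩ := hsurj x
  exact Set.mem_iUnion.2 ⟨i, mem_Lam_iff.2 ⟨hx, hi⟩⟩

/-- If `k(1),…,k(r) ∈ ℕ^{n-d}` are such that the `A_{σ̄} k(i)` represent all
`r = [ℤA : ℤA_σ]` classes of `(ℤA)/(ℤA_σ)`, then the sets `Λ_{k(i)}` are pairwise
disjoint and their union is `ℕ^{n-d}`. -/
theorem stmt8 (d e r : ℕ) (Aσ : Matrix (Fin d) (Fin d) ℤ) (Aτ : Matrix (Fin d) (Fin e) ℤ)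
    (hdet : Aσ.det ≠ 0)
    (hr : r = (colSpanZ Aσ).relIndex (colSpanZ Aσ ⊔ colSpanZ Aτ))
    (k : Fin r → (Fin e → ℤ)) (hpos : ∀ i j, 0 ≤ k i j)
    (hinj : ∀ i i', Aτ *ᵥ k i - Aτ *ᵥ k i' ∈ colSpanZ Aσ → i = i')
    (hsurj : ∀ m : Fin e → ℤ, ∃ i, Aτ *ᵥ m - Aτ *ᵥ k i ∈ colSpanZ Aσ) :
    (Pairwise fun i i' => Disjoint (Lam Aσ Aτ (k i)) (Lam Aσ Aτ (k i'))) ∧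
      (⋃ i, Lam Aσ Aτ (k i)) = {x : Fin e → ℤ | ∀ j, 0 ≤ x j} :=
  stmt8_general d e r Aσ Aτ k hinj hsurj
end

section
/- Let Y_τ = {x_i = 0 : i ∉ τ} ⊆ ℂ^n, and let L_s = F + (s−1)V_τ be the filtration interpolating the order filtration F and the Kashiwara–Malgrange filtration V_τ. If s > 1 satisfies Φ_A^s = Φ_A^{s±ε} for all small ε > 0, then every generator of type (ii) of the ideal Ĩ_A^s (a binomial ξ^{u_+} − ξ^{u_-} with supp(u) contained in a facet of Φ_A^s) is simultaneously F-homogeneous and V_τ-homogeneous. -/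
open Matrix

/-- Identify `s` with the weight vector `w_s` with `w_s(i) = 1` for `i ∈ τ` and
`w_s(i) = s` otherwise (the filtration `L_s = F + (s−1)V_τ` on pure `ξ`-monomials).
If `s > 1` and the `(A,s)`-umbrella is constant near `s` — so that a single facet
`F'` containing `supp u` is a facet of `Φ_A^{t}` for all `t` near `s` — then the
binomial `ξ^{u_+} − ξ^{u_-}` (where `Au = 0`, `supp u ⊆ F'`) is simultaneously
`F`-homogeneous (`∑ᵢ uᵢ = 0`) and `V_τ`-homogeneous (`∑_{i∉τ} uᵢ = 0`). -/
theorem stmt14 (d n : ℕ) (A : Matrix (Fin d) (Fin n) ℤ) (τ : Finset (Fin n))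
    (s : ℝ) (hs : 1 < s) (u : Fin n → ℤ) (hu : A *ᵥ u = 0)
    (w : ℝ → Fin n → ℝ) (hw : ∀ t i, w t i = if i ∈ τ then 1 else t)
    (F' : Set (Fin n)) (hsupp : ∀ i, u i ≠ 0 → i ∈ F')
    (ε : ℝ) (hε : 0 < ε)
    (hfacet : ∀ t : ℝ, |t - s| < ε → ∃ h : Fin d → ℝ,
        (∀ i ∈ F', (∑ k, h k * (A k i : ℝ)) = w t i) ∧
        (∀ i ∉ F', (∑ k, h k * (A k i : ℝ)) < w t i)) :
    (∑ i, u i = 0) ∧ (∑ i ∈ Finset.univ.filter (fun i => i ∉ τ), u i = 0) := by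
  -- For each t near s, ∑ᵢ uᵢ · w t i = 0.
  have key : ∀ t : ℝ, |t - s| < ε → ∑ i, (u i : ℝ) * w t i = 0 := by
    intro t ht
    obtain ⟨h, hF, -⟩ := hfacet t ht
    have : ∑ i, (u i : ℝ) * w t i = ∑ i, (u i : ℝ) * (∑ k, h k * (A k i : ℝ)) := by
      refine Finset.sum_congr rfl fun i _ => ?_
      by_cases hui : u i = 0
      · simp [hui]
      · rw [hF i (hsupp i hui)]
    rw [this]
    simp only [Finset.mul_sum]
    rw [Finset.sum_comm]
    have : ∀ k, ∑ i, (u i : ℝ) * (h k * (A k i : ℝ))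
        = h k * ((A *ᵥ u) k : ℤ) := by
      intro k
      simp only [Matrix.mulVec, dotProduct]
      push_cast
      rw [Finset.mul_sum]
      refine Finset.sum_congr rfl fun i _ => by ring
    simp only [this, hu]
    simp
  -- Evaluate the weight sum explicitly.
  have eval : ∀ t : ℝ, ∑ i, (u i : ℝ) * w t i
      = (∑ i ∈ Finset.univ.filter (fun i => i ∈ τ), (u i : ℝ))
        + t * ∑ i ∈ Finset.univ.filter (fun i => i ∉ τ), (u i : ℝ) := by
    intro t
    rw [← Finset.sum_filter_add_sum_filter_not Finset.univ (fun i => i ∈ τ)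
      (fun i => (u i : ℝ) * w t i), Finset.mul_sum]
    congr 1
    · refine Finset.sum_congr rfl fun i hi => ?_
      rw [hw]
      simp at hi
      simp [hi]
    · refine Finset.sum_congr rfl fun i hi => ?_
      rw [hw]
      simp at hi
      simp [hi]
      ring
  have h1 := key s (by simpa using hε)
  have h2 := key (s - ε / 2) (by
    rw [abs_sub_comm, show s - (s - ε / 2) = ε / 2 by ring, abs_of_pos (by positivity)]
    linarith)
  rw [eval] at h1 h2
  set S1 := ∑ i ∈ Finset.univ.filter (fun i => i ∈ τ), (u i : ℝ)
  set S2 := ∑ i ∈ Finset.univ.filter (fun i => i ∉ τ), (u i : ℝ)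
  have hS2 : S2 = 0 := by
    have : (ε / 2) * S2 = 0 := by linarith [h1, h2, mul_comm s S2]
    have hε2 : ε / 2 ≠ 0 := by positivity
    exact (mul_eq_zero.mp this).resolve_left hε2
  have hS1 : S1 = 0 := by
    rw [hS2] at h1; linarith
  have hV : ∑ i ∈ Finset.univ.filter (fun i => i ∉ τ), u i = 0 := by
    have : ((∑ i ∈ Finset.univ.filter (fun i => i ∉ τ), u i : ℤ) : ℝ) = 0 := by
      push_cast; exact hS2
    exact_mod_cast this
  refine ⟨?_, hV⟩
  have hT : ∑ i ∈ Finset.univ.filter (fun i => i ∈ τ), u i = 0 := by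
    have : ((∑ i ∈ Finset.univ.filter (fun i => i ∈ τ), u i : ℤ) : ℝ) = 0 := by
      push_cast; exact hS1
    exact_mod_cast this
  rw [← Finset.sum_filter_add_sum_filter_not Finset.univ (fun i => i ∈ τ) u, hT, hV]
  simp
end

section
/- Let A ∈ ℤ^{d×n} with rank(A_τ) < d for some τ ⊆ {1,…,n}, and let β ∈ ℂ^d be such that γ·(β − A_{τ̄}m) ≠ 0 for all m ∈ ℕ^{n-|τ|}, where γ ∈ ℚ^d is a nonzero vector with γ·A_τ = 0. Then the only formal series f = ∑_m f_m(x_τ)x_{τ̄}^m annihilated by the Euler operators E_i − β_i (i=1,…,d) is f = 0. -/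
/-- If `rank A_τ < d`, witnessed by a nonzero `γ ∈ ℚ^d` with `γ·A_τ = 0`, and
`γ·(β − A_{τ̄}m) ≠ 0` for all `m ∈ ℕ^{n-|τ|}`, then the only formal series
`f = ∑_m f_m(x_τ) x_{τ̄}^m` (coefficient function `c`) annihilated by all the Euler
operators `E_i − β_i` is `f = 0`. -/
theorem stmt18 (d l e : ℕ) (Aτ : Matrix (Fin d) (Fin l) ℤ) (Aτc : Matrix (Fin d) (Fin e) ℤ)
    (β : Fin d → ℂ) (γ : Fin d → ℚ) (hγ : γ ≠ 0)
    (hγA : ∀ j, (∑ i, γ i * (Aτ i j : ℚ)) = 0)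
    (hβ : ∀ q : Fin e → ℕ,
      (∑ i, (γ i : ℂ) * (β i - ∑ j, (Aτc i j : ℂ) * (q j : ℂ))) ≠ 0)
    (c : (Fin l → ℕ) → (Fin e → ℕ) → ℂ)
    (hEuler : ∀ (i : Fin d) (p : Fin l → ℕ) (q : Fin e → ℕ),
      ((∑ j, (Aτ i j : ℂ) * (p j : ℂ)) + (∑ j, (Aτc i j : ℂ) * (q j : ℂ)) - β i) * c p q = 0) :
    c = 0 := by
  funext p q
  have key : (∑ i, (γ i : ℂ) *
      ((∑ j, (Aτ i j : ℂ) * (p j : ℂ)) + (∑ j, (Aτc i j : ℂ) * (q j : ℂ)) - β i)) * c p q = 0 := by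
    rw [Finset.sum_mul]
    refine Finset.sum_eq_zero fun i _ => ?_
    rw [mul_assoc, hEuler i p q, mul_zero]
  have hz : ∀ j, (∑ i, (γ i : ℂ) * (Aτ i j : ℂ)) = 0 := fun j => by exact_mod_cast hγA j
  have hzero : (∑ i, (γ i : ℂ) * ∑ j, (Aτ i j : ℂ) * (p j : ℂ)) = 0 := by
    simp_rw [Finset.mul_sum]
    rw [Finset.sum_comm]
    simp_rw [← mul_assoc, ← Finset.sum_mul]
    simp [hz]
  have hsum : (∑ i, (γ i : ℂ) *
      ((∑ j, (Aτ i j : ℂ) * (p j : ℂ)) + (∑ j, (Aτc i j : ℂ) * (q j : ℂ)) - β i))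
      = -(∑ i, (γ i : ℂ) * (β i - ∑ j, (Aτc i j : ℂ) * (q j : ℂ))) := by
    simp_rw [mul_sub, mul_add]
    rw [Finset.sum_sub_distrib, Finset.sum_add_distrib, hzero, Finset.sum_sub_distrib]
    ring
  rw [hsum] at key
  have := hβ q
  simpa using mul_eq_zero.mp key |>.resolve_left (by simpa using this)
end
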